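/- If ξ is an n-dimensional Gaussian vector with mean zero and covariance Σ, P is an orthogonal projection matrix of rank at most s, and λ denotes the largest eigenvalue of Σ, then the quadratic form ‖Pξ‖² is stochastically dominated by λ times a chi-squared random variable with s degrees of freedom. -/

import Mathlib

/-!
Write `ξ = S^{1/2} g` with `g` standard Gaussian, so that `‖Pξ‖² = gᵀ M g` for
`M = (P S^{1/2})ᵀ (P S^{1/2})`. As `P` is a contraction, `gᵀ M g ≤ ‖S^{1/2} g‖² = gᵀ S g ≤ λ ‖g‖²`,
so every eigenvalue of `M` is at most `λ`, and `rank M ≤ rank P ≤ s`. The coordinates `cᵢ` of `g`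
in an orthonormal eigenbasis of `M` are again iid standard Gaussians, and
`gᵀ M g = ∑ μᵢ cᵢ² ≤ λ ∑_{μᵢ ≠ 0} cᵢ²`, where the last sum is `χ²` with at most `s` degrees
of freedom.
-/

open MeasureTheory ProbabilityTheory Matrix
open scoped ENNReal NNReal BigOperators

/-- The standard Gaussian measure on `Fin n → ℝ` (iid `N(0,1)` coordinates). -/
noncomputable def stdGaussianPi (n : ℕ) : Measure (Fin n → ℝ) :=
  Measure.pi fun _ => gaussianReal 0 1

/-- The chi-squared distribution with `d` degrees of freedom, i.e. the law of the
sum of squares of `d` independent standard Gaussians. -/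
noncomputable def chiSq (d : ℕ) : Measure ℝ :=
  (stdGaussianPi d).map fun x => ∑ i, (x i) ^ 2

/-- The positive semidefinite square root (the definition Mathlib had in Dec 2024, since
removed): `U * diag(√λ) * U*` with `U` the eigenvector unitary. -/
noncomputable def Matrix.PosSemidef.sqrt {n 𝕜 : Type*} [Fintype n] [DecidableEq n] [RCLike 𝕜]
    [PartialOrder 𝕜] {A : Matrix n n 𝕜} (hA : A.PosSemidef) : Matrix n n 𝕜 :=
  hA.1.eigenvectorUnitary.1 * diagonal ((↑) ∘ (√·) ∘ hA.1.eigenvalues) *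
  (star hA.1.eigenvectorUnitary : Matrix n n 𝕜)

/-- The centered Gaussian measure on `ℝⁿ` with covariance matrix `S`, realized as the
pushforward of the standard Gaussian under multiplication by `S^{1/2}`. -/
noncomputable def gaussianVec {n : ℕ} (S : Matrix (Fin n) (Fin n) ℝ) (hS : S.PosSemidef) :
    Measure (Fin n → ℝ) :=
  (stdGaussianPi n).map fun x => hS.sqrt.mulVec x

lemma EuclideanSpace.ofLp_dotProduct_ofLp {ι : Type*} [Fintype ι] (x y : EuclideanSpace ℝ ι) :
    x.ofLp ⬝ᵥ y.ofLp = inner ℝ x y := by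
  rw [EuclideanSpace.inner_eq_star_dotProduct, star_trivial, dotProduct_comm]

lemma MeasureTheory.Measure.pi_map_comp_of_injective {ι κ α : Type*} [Fintype ι] [Fintype κ]
    [MeasurableSpace α] (μ : ι → Measure α) [∀ i, IsProbabilityMeasure (μ i)] {e : κ → ι}
    (he : Function.Injective e) :
    (Measure.pi μ).map (fun x j => x (e j)) = Measure.pi fun j => μ (e j) := by
  refine (Measure.pi_eq fun s hs => ?_).symm
  have hpre : (fun x : ι → α => fun j => x (e j)) ⁻¹' Set.univ.pi s
      = Set.univ.pi (Function.extend e s fun _ => Set.univ) := by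
    ext x
    simp only [Set.mem_preimage, Set.mem_univ_pi]
    refine ⟨fun h i => ?_, fun h j => by simpa [he.extend_apply] using h (e j)⟩
    by_cases hi : ∃ j, e j = i
    · obtain ⟨j, rfl⟩ := hi
      simpa [he.extend_apply] using h j
    · simp [Function.extend_apply' _ _ _ hi]
  rw [Measure.map_apply (by fun_prop) (.univ_pi hs), hpre, Measure.pi_pi]
  refine (Fintype.prod_of_injective e he _ _ (fun i hi => ?_) fun j => by rw [he.extend_apply]).symm
  rw [Function.extend_apply' _ _ _ hi, measure_univ]

lemma stdGaussianPi_map_orthonormalBasis {n : ℕ}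
    (b : OrthonormalBasis (Fin n) ℝ (EuclideanSpace ℝ (Fin n))) :
    (stdGaussianPi n).map (fun c => ⇑(∑ i, c i • b i)) = stdGaussianPi n := by
  have h := congrArg (Measure.map WithLp.ofLp) (stdGaussian_eq_map_pi_orthonormalBasis b)
  rw [← map_pi_eq_stdGaussian, Measure.map_map (by fun_prop) (by fun_prop),
    Measure.map_map (by fun_prop) (by fun_prop)] at h
  exact h.symm.trans (Measure.map_id (μ := stdGaussianPi n))

lemma stdGaussianPi_map_sum_sq {n : ℕ} (T : Finset (Fin n)) :
    (stdGaussianPi n).map (fun z => ∑ i ∈ T, z i ^ 2) = chiSq T.card := by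
  set e : Fin T.card → Fin n := fun j => T.equivFin.symm j
  have he : Function.Injective e := Subtype.val_injective.comp T.equivFin.symm.injective
  have hsum : (fun z : Fin n → ℝ => ∑ i ∈ T, z i ^ 2)
      = (fun y : Fin T.card → ℝ => ∑ j, y j ^ 2) ∘ fun z j => z (e j) := by
    ext z
    rw [Function.comp_apply, Equiv.sum_comp T.equivFin.symm (fun i : T => z i ^ 2),
      Finset.sum_coe_sort T (fun i => z i ^ 2)]
  rw [hsum, ← Measure.map_map (by fun_prop) (by fun_prop), stdGaussianPi,
    Measure.pi_map_comp_of_injective _ he]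
  rfl

lemma chiSq_tail_mono {k s : ℕ} (hks : k ≤ s) {lam : ℝ} (hlam : 0 ≤ lam) (t : ℝ) :
    chiSq k {x | t < lam * x} ≤ chiSq s {x | t < lam * x} := by
  have hk := stdGaussianPi_map_sum_sq ((Finset.univ : Finset (Fin k)).map (Fin.castLEEmb hks))
  rw [Finset.card_map, Finset.card_univ, Fintype.card_fin] at hk
  rw [← hk, chiSq, Measure.map_apply (by fun_prop) (measurableSet_lt (by fun_prop) (by fun_prop)),
    Measure.map_apply (by fun_prop) (measurableSet_lt (by fun_prop) (by fun_prop))]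
  refine measure_mono fun z hz => lt_of_lt_of_le hz (mul_le_mul_of_nonneg_left ?_ hlam)
  exact Finset.sum_le_univ_sum_of_nonneg fun i => sq_nonneg (z i)

namespace Matrix

variable {ι : Type*} [Fintype ι]

lemma sum_sq_mulVec {κ R : Type*} [Fintype κ] [CommSemiring R] (A : Matrix κ ι R) (x : ι → R) :
    ∑ i, (A *ᵥ x) i ^ 2 = x ⬝ᵥ (Aᵀ * A) *ᵥ x := by
  rw [← mulVec_mulVec, dotProduct_mulVec, vecMul_transpose]
  simp only [dotProduct, sq]

variable [DecidableEq ι]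

lemma PosSemidef.transpose_sqrt {S : Matrix ι ι ℝ} (hS : S.PosSemidef) : hS.sqrtᵀ = hS.sqrt := by
  simp only [PosSemidef.sqrt, transpose_mul, star_eq_conjTranspose,
    conjTranspose_eq_transpose_of_trivial, transpose_transpose, diagonal_transpose,
    Matrix.mul_assoc]

lemma PosSemidef.sqrt_mul_self {S : Matrix ι ι ℝ} (hS : S.PosSemidef) : hS.sqrt * hS.sqrt = S := by
  set U : Matrix ι ι ℝ := (hS.1.eigenvectorUnitary : Matrix ι ι ℝ)
  have hUU : star U * U = 1 := Unitary.coe_star_mul_self hS.1.eigenvectorUnitary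
  have hD : diagonal (RCLike.ofReal ∘ (√·) ∘ hS.1.eigenvalues : ι → ℝ) *
      diagonal (RCLike.ofReal ∘ (√·) ∘ hS.1.eigenvalues) =
        diagonal (RCLike.ofReal ∘ hS.1.eigenvalues) := by
    rw [diagonal_mul_diagonal]
    congr 1
    ext i
    simp [Real.mul_self_sqrt (hS.eigenvalues_nonneg i)]
  conv_rhs => rw [hS.1.spectral_theorem, Unitary.conjStarAlgAut_apply]
  simp only [PosSemidef.sqrt, Matrix.mul_assoc]
  rw [← Matrix.mul_assoc (star U) U, hUU, Matrix.one_mul, ← Matrix.mul_assoc (diagonal _), hD]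

lemma sum_sq_mulVec_le_of_isProjection {P : Matrix ι ι ℝ} (hPsymm : Pᵀ = P) (hPproj : P * P = P)
    (w : ι → ℝ) : ∑ i, (P *ᵥ w) i ^ 2 ≤ ∑ i, w i ^ 2 := by
  have hcompl : (1 - P)ᵀ * (1 - P) = 1 - P := by
    simp [hPsymm, Matrix.sub_mul, Matrix.mul_sub, hPproj]
  have hsplit : ∑ i, (P *ᵥ w) i ^ 2 + ∑ i, ((1 - P) *ᵥ w) i ^ 2 = ∑ i, w i ^ 2 := by
    rw [sum_sq_mulVec, sum_sq_mulVec, hPsymm, hPproj, hcompl, ← dotProduct_add, ← add_mulVec,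
      add_sub_cancel, one_mulVec]
    simp only [dotProduct, sq]
  linarith [Finset.sum_nonneg fun i (_ : i ∈ Finset.univ) => sq_nonneg (((1 - P) *ᵥ w) i)]

variable {M : Matrix ι ι ℝ}

lemma IsHermitian.dotProduct_mulVec_sum_eigenvectorBasis (hM : M.IsHermitian) (c : ι → ℝ) :
    ⇑(∑ i, c i • hM.eigenvectorBasis i) ⬝ᵥ M *ᵥ ⇑(∑ i, c i • hM.eigenvectorBasis i)
      = ∑ i, hM.eigenvalues i * c i ^ 2 := by
  have hMv : M *ᵥ ⇑(∑ i, c i • hM.eigenvectorBasis i)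
      = ⇑(∑ i, (hM.eigenvalues i * c i) • hM.eigenvectorBasis i) := by
    simp only [WithLp.ofLp_sum, WithLp.ofLp_smul, mulVec_sum, mulVec_smul,
      hM.mulVec_eigenvectorBasis, smul_smul, mul_comm]
  rw [hMv, EuclideanSpace.ofLp_dotProduct_ofLp, hM.eigenvectorBasis.orthonormal.inner_sum]
  simp only [starRingEnd_apply, star_trivial]
  exact Finset.sum_congr rfl fun i _ => by ring

lemma IsHermitian.dotProduct_mulVec_le (hM : M.IsHermitian) {lam : ℝ}
    (hle : ∀ i, hM.eigenvalues i ≤ lam) (x : ι → ℝ) : x ⬝ᵥ M *ᵥ x ≤ lam * (x ⬝ᵥ x) := by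
  set b := hM.eigenvectorBasis
  have hx : x = ⇑(∑ i, b.repr (WithLp.toLp 2 x) i • b i) := by rw [b.sum_repr]
  have hxx : x ⬝ᵥ x = ∑ i, b.repr (WithLp.toLp 2 x) i ^ 2 := by
    conv_lhs => rw [hx]
    rw [EuclideanSpace.ofLp_dotProduct_ofLp, b.orthonormal.inner_sum]
    simp [sq]
  rw [hxx, Finset.mul_sum]
  conv_lhs => rw [hx, hM.dotProduct_mulVec_sum_eigenvectorBasis]
  exact Finset.sum_le_sum fun i _ => mul_le_mul_of_nonneg_right (hle i) (sq_nonneg _)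

lemma IsHermitian.eigenvalues_le_of_dotProduct_mulVec_le (hM : M.IsHermitian) {lam : ℝ}
    (h : ∀ x, x ⬝ᵥ M *ᵥ x ≤ lam * (x ⬝ᵥ x)) (i : ι) : hM.eigenvalues i ≤ lam := by
  have hunit : ⇑(hM.eigenvectorBasis i) ⬝ᵥ ⇑(hM.eigenvectorBasis i) = 1 := by
    rw [EuclideanSpace.ofLp_dotProduct_ofLp, real_inner_self_eq_norm_sq,
      hM.eigenvectorBasis.orthonormal.1 i, one_pow]
  simpa [hM.mulVec_eigenvectorBasis, hunit] using h (hM.eigenvectorBasis i)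

lemma PosSemidef.dotProduct_mulVec_proj_mul_sqrt_le {S P : Matrix ι ι ℝ} (hS : S.PosSemidef)
    {lam : ℝ} (hle : ∀ i, hS.1.eigenvalues i ≤ lam) (hPsymm : Pᵀ = P) (hPproj : P * P = P)
    (x : ι → ℝ) :
    x ⬝ᵥ ((P * hS.sqrt)ᵀ * (P * hS.sqrt)) *ᵥ x ≤ lam * (x ⬝ᵥ x) :=
  calc x ⬝ᵥ ((P * hS.sqrt)ᵀ * (P * hS.sqrt)) *ᵥ x = ∑ i, (P *ᵥ (hS.sqrt *ᵥ x)) i ^ 2 := by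
        rw [mulVec_mulVec, sum_sq_mulVec]
    _ ≤ ∑ i, (hS.sqrt *ᵥ x) i ^ 2 := sum_sq_mulVec_le_of_isProjection hPsymm hPproj _
    _ = x ⬝ᵥ S *ᵥ x := by rw [sum_sq_mulVec, hS.transpose_sqrt, hS.sqrt_mul_self]
    _ ≤ lam * (x ⬝ᵥ x) := hS.1.dotProduct_mulVec_le hle x

end Matrix

lemma stdGaussianPi_dotProduct_mulVec_tail_le_chiSq {n s : ℕ} {M : Matrix (Fin n) (Fin n) ℝ}
    (hM : M.IsHermitian) {lam : ℝ} (hlam : 0 ≤ lam) (hle : ∀ i, hM.eigenvalues i ≤ lam)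
    (hrank : M.rank ≤ s) (t : ℝ) :
    stdGaussianPi n {y | t < y ⬝ᵥ M *ᵥ y} ≤ chiSq s {x | t < lam * x} := by
  set T := Finset.univ.filter fun i => hM.eigenvalues i ≠ 0
  have hT : T.card ≤ s := by
    rwa [← Fintype.card_subtype, ← hM.rank_eq_card_non_zero_eigs]
  have hweighted : ∀ c : Fin n → ℝ, ∑ i, hM.eigenvalues i * c i ^ 2 ≤ lam * ∑ i ∈ T, c i ^ 2 := by
    intro c
    rw [← Finset.sum_filter_of_ne fun i _ hi => left_ne_zero_of_mul hi, Finset.mul_sum]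
    exact Finset.sum_le_sum fun i _ => mul_le_mul_of_nonneg_right (hle i) (sq_nonneg _)
  calc stdGaussianPi n {y | t < y ⬝ᵥ M *ᵥ y}
      = stdGaussianPi n {c | t < ∑ i, hM.eigenvalues i * c i ^ 2} := by
        conv_lhs => rw [← stdGaussianPi_map_orthonormalBasis hM.eigenvectorBasis]
        rw [Measure.map_apply (by fun_prop) (measurableSet_lt (by fun_prop) (by fun_prop))]
        simp only [Set.preimage_ofPred_eq, hM.dotProduct_mulVec_sum_eigenvectorBasis]
    _ ≤ stdGaussianPi n {c | t < lam * ∑ i ∈ T, c i ^ 2} :=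
        measure_mono fun c hc => lt_of_lt_of_le hc (hweighted c)
    _ = chiSq T.card {x | t < lam * x} := by
        rw [← stdGaussianPi_map_sum_sq,
          Measure.map_apply (by fun_prop) (measurableSet_lt (by fun_prop) (by fun_prop))]
        rfl
    _ ≤ chiSq s {x | t < lam * x} := chiSq_tail_mono hT hlam t

lemma measure_preimage_of_map_eq_gaussianVec {Ω : Type*} [MeasurableSpace Ω] {μ : Measure Ω}
    {n : ℕ} {S : Matrix (Fin n) (Fin n) ℝ} {hS : S.PosSemidef} {ξ : Ω → Fin n → ℝ}
    (hξ : μ.map ξ = gaussianVec S hS) {B : Set (Fin n → ℝ)} (hB : MeasurableSet B) :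
    μ (ξ ⁻¹' B) = stdGaussianPi n ((hS.sqrt *ᵥ ·) ⁻¹' B) := by
  have hξm : AEMeasurable ξ μ := .of_map_ne_zero <| by
    rw [hξ, gaussianVec, stdGaussianPi]
    exact (Measure.isProbabilityMeasure_map (by fun_prop)).ne_zero
  rw [← Measure.map_apply_of_aemeasurable hξm hB, hξ, gaussianVec,
    Measure.map_apply (by fun_prop) hB]

theorem stmt_0_general {Ω : Type*} [MeasureSpace Ω]
    {n s : ℕ} (S : Matrix (Fin n) (Fin n) ℝ) (hS : S.PosSemidef)
    (lam : ℝ) (hlam : IsGreatest (Set.range hS.1.eigenvalues) lam)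
    (P : Matrix (Fin n) (Fin n) ℝ) (hPsymm : Pᵀ = P) (hPproj : P * P = P)
    (hPrank : P.rank ≤ s)
    (ξ : Ω → (Fin n → ℝ)) (hξ : Measure.map ξ ℙ = gaussianVec S hS) :
    ∀ t : ℝ, ℙ {ω | t < ∑ i, (P.mulVec (ξ ω) i) ^ 2} ≤ chiSq s {x | t < lam * x} := by
  intro t
  set A := P * hS.sqrt
  have hM : (Aᵀ * A).IsHermitian := by
    simpa using (posSemidef_conjTranspose_mul_self A).1
  have hlam0 : 0 ≤ lam := by
    obtain ⟨i, rfl⟩ := hlam.1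
    exact hS.eigenvalues_nonneg i
  have hle : ∀ i, hM.eigenvalues i ≤ lam := hM.eigenvalues_le_of_dotProduct_mulVec_le
    (hS.dotProduct_mulVec_proj_mul_sqrt_le (fun i => hlam.2 ⟨i, rfl⟩) hPsymm hPproj)
  have hrank : (Aᵀ * A).rank ≤ s :=
    (rank_transpose_mul_self A).trans_le ((rank_mul_le_left _ _).trans hPrank)
  have hlaw : ℙ {ω | t < ∑ i, (P *ᵥ ξ ω) i ^ 2} = stdGaussianPi n {y | t < y ⬝ᵥ (Aᵀ * A) *ᵥ y} := by
    change ℙ (ξ ⁻¹' {v | t < ∑ i, (P *ᵥ v) i ^ 2}) = _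
    rw [measure_preimage_of_map_eq_gaussianVec hξ (measurableSet_lt (by fun_prop) (by fun_prop))]
    simp only [Set.preimage_ofPred_eq, mulVec_mulVec, ← sum_sq_mulVec, A]
  rw [hlaw]
  exact stdGaussianPi_dotProduct_mulVec_tail_le_chiSq hM hlam0 hle hrank t

/-- If `ξ ~ N_n(0, Σ)`, `P` is an orthogonal projection matrix of rank at most `s`, and
`λ` is the largest eigenvalue of `Σ`, then `‖Pξ‖²` is stochastically dominated by
`λ · χ²_s`. -/
theorem stmt_0 {Ω : Type*} [MeasureSpace Ω] [IsProbabilityMeasure (ℙ : Measure Ω)]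
    {n s : ℕ} (S : Matrix (Fin n) (Fin n) ℝ) (hS : S.PosSemidef)
    (lam : ℝ) (hlam : IsGreatest (Set.range hS.1.eigenvalues) lam)
    (P : Matrix (Fin n) (Fin n) ℝ) (hPsymm : Pᵀ = P) (hPproj : P * P = P)
    (hPrank : P.rank ≤ s)
    (ξ : Ω → (Fin n → ℝ)) (hξ : Measure.map ξ ℙ = gaussianVec S hS) :
    ∀ t : ℝ, ℙ {ω | t < ∑ i, (P.mulVec (ξ ω) i) ^ 2} ≤ chiSq s {x | t < lam * x} :=
  stmt_0_general S hS lam hlam P hPsymm hPproj hPrank ξ hξ
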